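/- Let k ≥ 1 and let C be a self-dual Z_{2k}-code of length n generated by vectors g_1,...,g_s ∈ (Z_{2k})^n, each of Euclidean weight divisible by 4k. Then every codeword of C has Euclidean weight divisible by 4k; that is, C is a Type II Z_{2k}-code. -/

import Mathlib

open Finset

/-- Inner product of two vectors over `ZMod m`. -/
def dotP {m : ℕ} {ι : Type} [Fintype ι] (x y : ι → ZMod m) : ZMod m :=
  ∑ i, x i * y i

/-- A `ZMod m`-code (submodule) is self-dual if it equals its dual code. -/
def IsSelfDual {m : ℕ} {ι : Type} [Fintype ι]
    (C : Submodule (ZMod m) (ι → ZMod m)) : Prop :=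
  ∀ x, x ∈ C ↔ ∀ y ∈ C, dotP x y = 0

/-- The code of length `2n` with generator matrix `(I | M)`: the span of the
vectors `(e_i, M i)`. -/
def genCode (m : ℕ) {ι : Type} [Fintype ι] [DecidableEq ι] (M : ι → ι → ZMod m) :
    Submodule (ZMod m) (ι ⊕ ι → ZMod m) :=
  Submodule.span (ZMod m)
    {v | ∃ i : ι, v = Sum.elim (fun j => if j = i then 1 else 0) (M i)}

/-- The map `ρ : ZMod m → ℤ` sending the representative `i ∈ {0,…,m−1}` to `i`
if `i ≤ m/2` and to `i − m` otherwise (for `m = 2k` this is the map of the paper). -/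
def rho (m : ℕ) (a : ZMod m) : ℤ :=
  if a.val ≤ m / 2 then (a.val : ℤ) else (a.val : ℤ) - (m : ℤ)

/-- Euclidean weight of a vector over `ZMod m`. -/
def wtE {m : ℕ} {ι : Type} [Fintype ι] (v : ι → ZMod m) : ℤ :=
  ∑ i, (rho m (v i)) ^ 2

/-- A Type II `ZMod (2k)`-code: self-dual and all Euclidean weights divisible by `4k`. -/
def IsTypeII (k : ℕ) {ι : Type} [Fintype ι]
    (C : Submodule (ZMod (2 * k)) (ι → ZMod (2 * k))) : Prop :=
  IsSelfDual C ∧ ∀ c ∈ C, (4 * (k : ℤ)) ∣ wtE c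

/-- Equivalence of `ZMod m`-codes: a permutation of coordinates together with
sign changes. -/
def CodeEquiv {m n : ℕ} (C C' : Submodule (ZMod m) (Fin n → ZMod m)) : Prop :=
  ∃ (σ : Equiv.Perm (Fin n)) (ε : Fin n → ZMod m),
    (∀ i, ε i = 1 ∨ ε i = -1) ∧
    (C' : Set (Fin n → ZMod m)) =
      (fun c : Fin n → ZMod m => fun i => ε i * c (σ i)) '' (C : Set (Fin n → ZMod m))

/-- The binary part of a `ZMod m`-code. -/
def binaryPart {m n : ℕ} (C : Submodule (ZMod m) (Fin n → ZMod m)) :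
    Set (Fin n → ZMod 2) :=
  {b | ∃ c ∈ C, ∀ i, b i = ((rho m (c i) : ℤ) : ZMod 2)}

/-- Hamming weight of a binary vector. -/
def wtH {n : ℕ} (b : Fin n → ZMod 2) : ℕ :=
  (Finset.univ.filter fun i => b i ≠ 0).card

/-- The `n × n` negacirculant matrix with first row `r`. -/
def negacirc {m n : ℕ} (r : Fin n → ZMod m) : Fin n → Fin n → ZMod m :=
  fun i j =>
    if h : (i : ℕ) ≤ (j : ℕ) then r ⟨(j : ℕ) - (i : ℕ), by have hj := j.isLt; omega⟩
    else -r ⟨n + (j : ℕ) - (i : ℕ), by have hi := i.isLt; have hj := j.isLt; omega⟩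

/-- The block matrix `[[A, B], [−Bᵀ, Aᵀ]]`. -/
def fourBlock {m n : ℕ} (A B : Fin n → Fin n → ZMod m) :
    (Fin n ⊕ Fin n) → (Fin n ⊕ Fin n) → ZMod m
  | Sum.inl i, Sum.inl j => A i j
  | Sum.inl i, Sum.inr j => B i j
  | Sum.inr i, Sum.inl j => -B j i
  | Sum.inr i, Sum.inr j => A j i

/-- The Construction A lattice `A_m(C) = (1/√m)(ρ(C) + m ℤ^n)` as a subset of `ℝ^n`. -/
noncomputable def constrA (m : ℕ) {n : ℕ} (C : Submodule (ZMod m) (Fin n → ZMod m)) :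
    Set (Fin n → ℝ) :=
  {x | ∃ c ∈ C, ∃ z : Fin n → ℤ,
    x = fun i => (1 / Real.sqrt m) * ((rho m (c i) : ℝ) + (m : ℝ) * (z i : ℝ))}

/-! Lifting a codeword coordinatewise through `ρ`, the Euclidean weight becomes a quadratic form
on `ℤⁿ` whose polar form `2 ∑ ρ(xᵢ) ρ(yᵢ)` is twice a lift of `⟨x, y⟩`. Since every lift of
`a ∈ ℤ/2k` has the same square modulo `4k`, orthogonal codewords satisfy
`wt_E(x + y) ≡ wt_E(x) + wt_E(y) (mod 4k)`; in a self-dual code any two codewords are orthogonal,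
so divisibility by `4k` passes from the generators to all of their ℤ/2k-linear combinations. -/

theorem Int.sq_modEq_sq_of_modEq_two_mul {a b : ℤ} {k : ℤ} (h : a ≡ b [ZMOD 2 * k]) :
    a ^ 2 ≡ b ^ 2 [ZMOD 4 * k] := by
  rw [Int.modEq_iff_dvd] at h ⊢
  have hsum : 2 ∣ b + a := by
    rw [show b + a = (b - a) + 2 * a by ring]
    exact dvd_add ((dvd_mul_right 2 k).trans h) (dvd_mul_right 2 a)
  rw [sq_sub_sq, mul_comm (b + a), show 4 * k = 2 * k * 2 by ring]
  exact mul_dvd_mul h hsum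

@[simp]
theorem rho_zero (m : ℕ) : rho m 0 = 0 := by
  simp [rho]

theorem intCast_rho {m : ℕ} [NeZero m] (a : ZMod m) : ((rho m a : ℤ) : ZMod m) = a := by
  unfold rho
  split_ifs <;> simp

@[simp]
theorem wtE_zero {m : ℕ} {ι : Type} [Fintype ι] : wtE (0 : ι → ZMod m) = 0 := by
  simp [wtE]

theorem rho_sq_modEq_of_intCast_eq {k : ℕ} [NeZero k] {a : ZMod (2 * k)} {r : ℤ}
    (hr : (r : ZMod (2 * k)) = a) : rho (2 * k) a ^ 2 ≡ r ^ 2 [ZMOD 4 * k] := by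
  refine Int.sq_modEq_sq_of_modEq_two_mul ?_
  exact_mod_cast (ZMod.intCast_eq_intCast_iff ..).1 (by rw [intCast_rho, hr])

theorem wtE_add_modEq_of_dotP_eq_zero {k : ℕ} [NeZero k] {ι : Type} [Fintype ι]
    {x y : ι → ZMod (2 * k)} (hxy : dotP x y = 0) :
    wtE (x + y) ≡ wtE x + wtE y [ZMOD 4 * k] := by
  set ρ := rho (2 * k)
  have hcross : (2 * k : ℤ) ∣ ∑ i, ρ (x i) * ρ (y i) :=
    mod_cast (ZMod.intCast_zmod_eq_zero_iff_dvd _ (2 * k)).1 (by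
      push_cast [ρ, intCast_rho]
      exact hxy)
  calc wtE (x + y)
      ≡ ∑ i, (ρ (x i) + ρ (y i)) ^ 2 [ZMOD 4 * k] :=
        Int.ModEq.sum fun i _ => rho_sq_modEq_of_intCast_eq (by push_cast [ρ, intCast_rho]; rfl)
    _ = wtE x + wtE y + 2 * ∑ i, ρ (x i) * ρ (y i) := by
        simp only [wtE, add_sq, Finset.sum_add_distrib, Finset.mul_sum, mul_assoc]
        ring
    _ ≡ wtE x + wtE y + 0 [ZMOD 4 * k] := by
        refine Int.ModEq.add_left _ (Int.modEq_zero_iff_dvd.2 ?_)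
        simpa [show (4 * k : ℤ) = 2 * (2 * k) by ring] using mul_dvd_mul_left 2 hcross
    _ = wtE x + wtE y := add_zero _

theorem dvd_wtE_of_mem_span {k : ℕ} [NeZero k] {ι : Type} [Fintype ι]
    {s : Set (ι → ZMod (2 * k))} (hs : ∀ v ∈ s, (4 * k : ℤ) ∣ wtE v)
    (horth : ∀ x ∈ Submodule.span (ZMod (2 * k)) s, ∀ y ∈ Submodule.span (ZMod (2 * k)) s,
      dotP x y = 0)
    {c : ι → ZMod (2 * k)} (hc : c ∈ Submodule.span (ZMod (2 * k)) s) :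
    (4 * k : ℤ) ∣ wtE c := by
  have hadd : ∀ x ∈ Submodule.span (ZMod (2 * k)) s, ∀ y ∈ Submodule.span (ZMod (2 * k)) s,
      (4 * k : ℤ) ∣ wtE x → (4 * k : ℤ) ∣ wtE y → (4 * k : ℤ) ∣ wtE (x + y) :=
    fun x hx y hy hwx hwy =>
      ((wtE_add_modEq_of_dotP_eq_zero (horth x hx y hy)).dvd_iff).2 (dvd_add hwx hwy)
  induction hc using Submodule.span_induction with
  | mem v hv => exact hs v hv
  | zero => simp
  | add x y hx hy ihx ihy => exact hadd x hx y hy ihx ihy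
  | smul a x hx ihx =>
    rw [← ZMod.natCast_zmod_val a, Nat.cast_smul_eq_nsmul]
    induction a.val with
    | zero => simp
    | succ n ih =>
      rw [succ_nsmul]
      exact hadd _ (nsmul_mem hx n) x hx ih ihx

/-- a self-dual `ZMod (2k)`-code generated by vectors each of
Euclidean weight divisible by `4k` is Type II. -/
theorem stmt5 (k n s : ℕ) (hk : 1 ≤ k)
    (g : Fin s → (Fin n → ZMod (2 * k)))
    (C : Submodule (ZMod (2 * k)) (Fin n → ZMod (2 * k)))
    (hgen : C = Submodule.span (ZMod (2 * k)) (Set.range g))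
    (hSD : IsSelfDual C)
    (hg : ∀ i, (4 * (k : ℤ)) ∣ wtE (g i)) :
    ∀ c ∈ C, (4 * (k : ℤ)) ∣ wtE c := by
  have : NeZero k := ⟨by omega⟩
  subst hgen
  intro c hc
  exact dvd_wtE_of_mem_span (Set.forall_mem_range.2 hg) (fun x hx => (hSD x).1 hx) hc
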